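/- Let M_i = (A_i, X_i, S_i, start_i, δ_i, γ_i) for 1 ≤ i ≤ n be Moore machines with representing functions f_i, let M = (A, X, S, start, δ, γ) be their general product with connection map g and output map h, and let f and u_i be defined by the simultaneous recursion f(w) = h(f_1(u_1(w)), …, f_n(u_n(w))), u_i(Λ) = Λ, u_i(wa) = u_i(w) ∘ g(i, a, f(w)). Then for every w ∈ A*, δ*(start, w) = (δ_1*(start_1, u_1(w)), …, δ_n*(start_n, u_n(w))). -/

import Mathlib

/-- Extension of a transition function `δ : S → A → S` to strings:
`runStar δ s Λ = s` and `runStar δ s (w ++ [a]) = δ (runStar δ s w) a`. -/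
def runStar {S A : Type*} (δ : S → A → S) (s : S) (w : List A) : S :=
  w.foldl δ s

section runStar

variable {S A : Type*} (δ : S → A → S)

@[simp]
theorem runStar_nil (s : S) : runStar δ s [] = s := rfl

theorem runStar_append (s : S) (w v : List A) :
    runStar δ s (w ++ v) = runStar δ (runStar δ s w) v :=
  List.foldl_append

@[simp]
theorem runStar_append_singleton (s : S) (w : List A) (a : A) :
    runStar δ s (w ++ [a]) = δ (runStar δ s w) a :=
  runStar_append δ s w [a]

theorem runStar_eq_of_recursion {s : S} {σ : List A → S} (h_nil : σ [] = s)
    (h_step : ∀ w a, σ (w ++ [a]) = δ (σ w) a) (w : List A) : runStar δ s w = σ w := by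
  induction w using List.reverseRecOn with
  | nil => exact h_nil.symm
  | append_singleton w a ih => rw [runStar_append_singleton, ih, h_step]

end runStar

/-- with `f`, `u` defined by the simultaneous recursion, the state
reached by the general product after input `w` is the tuple of states reached
by the factors after inputs `u i w`. -/
theorem stmt1 {n : ℕ} {A X : Type*} {Ai Xi Si : Fin n → Type*}
    (start : ∀ i, Si i) (δ : ∀ i, Si i → Ai i → Si i) (γ : ∀ i, Si i → Xi i)
    (fi : ∀ i, List (Ai i) → Xi i)
    (hrep : ∀ i z, fi i z = γ i (runStar (δ i) (start i) z))
    (h : (∀ i, Xi i) → X) (g : ∀ i : Fin n, A → X → List (Ai i))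
    (f : List A → X) (u : ∀ i : Fin n, List A → List (Ai i))
    (hf : ∀ w, f w = h fun i => fi i (u i w))
    (hu0 : ∀ i, u i [] = [])
    (hua : ∀ i w a, u i (w ++ [a]) = u i w ++ g i a (f w)) :
    ∀ w : List A,
      runStar
        (fun (s : ∀ j, Si j) (a : A) => fun j =>
          runStar (δ j) (s j) (g j a (h fun k => γ k (s k))))
        start w
      = fun i => runStar (δ i) (start i) (u i w) := by
  refine runStar_eq_of_recursion _ (funext fun i => by rw [hu0, runStar_nil]) fun w a => ?_
  have hf_state : f w = h fun k => γ k (runStar (δ k) (start k) (u k w)) := by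
    simp only [hf, hrep]
  funext i
  rw [hua, runStar_append, hf_state]
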